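/- The depth-3 iterated integral H(0,0,1) at 1, defined as ∫_0^1 (1/t₁) ∫_0^{t₁} (1/t₂) ∫_0^{t₂} (1/(t₃-1)) dt₃ dt₂ dt₁, equals -ζ(3). -/

import Mathlib

/-!
Expanding `log (1 - t) = -∑ tⁿ⁺¹/(n+1)` turns the innermost integral into `-Li₁`, and each
further integration against `dt/t` raises the index of the polylogarithm series
`Liₖ(x) = ∑ xⁿ⁺¹/(n+1)ᵏ` by one (integrate termwise; the series of integrals is dominated by
`∑ 1/(n+1)²`). Hence the triple integral is `-Li₃(1) = -ζ(3)`.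
-/

open MeasureTheory Set

noncomputable def polylogSeries (k : ℕ) (x : ℝ) : ℝ :=
  ∑' n : ℕ, x ^ (n + 1) / ((n : ℝ) + 1) ^ k

lemma polylogSeries_one {x : ℝ} (hx : |x| < 1) : polylogSeries 1 x = -Real.log (1 - x) := by
  simpa [polylogSeries] using (Real.hasSum_pow_div_log_of_abs_lt_one hx).tsum_eq

lemma summable_pow_div_pow {k : ℕ} (hk : 2 ≤ k) {x : ℝ} (hx0 : 0 ≤ x) (hx1 : x ≤ 1) :
    Summable fun n : ℕ => x ^ (n + 1) / ((n : ℝ) + 1) ^ k := by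
  have hzeta : Summable fun n : ℕ => 1 / ((n : ℝ) + 1) ^ k := by
    simpa using (summable_nat_add_iff 1).mpr
      (Real.summable_one_div_nat_pow.mpr (by omega : 1 < k))
  refine hzeta.of_nonneg_of_le (fun n => by positivity) fun n => ?_
  gcongr
  exact pow_le_one₀ hx0 hx1

lemma ofReal_polylogSeries_one {k : ℕ} (hk : 1 < k) :
    (polylogSeries k 1 : ℂ) = riemannZeta k := by
  rw [zeta_eq_tsum_one_div_nat_add_one_cpow (by simpa using hk), polylogSeries,
    Complex.ofReal_tsum]
  push_cast
  simp_rw [one_pow, Complex.cpow_natCast]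

lemma integral_pow_div_pow (n k : ℕ) (x : ℝ) :
    ∫ t in (0 : ℝ)..x, t ^ n / ((n : ℝ) + 1) ^ k = x ^ (n + 1) / ((n : ℝ) + 1) ^ (k + 1) := by
  rw [intervalIntegral.integral_div, integral_pow]
  field_simp
  ring

lemma integral_one_div_sub_one {t : ℝ} (ht : t < 1) :
    ∫ s in (0 : ℝ)..t, 1 / (s - 1) = Real.log (1 - t) := by
  rw [intervalIntegral.integral_comp_sub_right (fun s => 1 / s), integral_one_div]
  · congr 1
    ring
  · exact notMem_uIcc_of_gt (by norm_num) (by linarith)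

lemma integral_one_div_mul_polylogSeries {k : ℕ} (hk : 1 ≤ k) {x : ℝ} (hx0 : 0 ≤ x)
    (hx1 : x ≤ 1) :
    ∫ t in (0 : ℝ)..x, 1 / t * polylogSeries k t = polylogSeries (k + 1) x := by
  have hterm : ∀ t ∈ Ioc 0 x,
      1 / t * polylogSeries k t = ∑' n : ℕ, t ^ n / ((n : ℝ) + 1) ^ k := by
    intro t ht
    rw [polylogSeries, ← tsum_mul_left]
    congr 1 with n
    field_simp [ht.1.ne']
    ring
  have hint : ∀ n : ℕ, IntegrableOn (fun t : ℝ => t ^ n / ((n : ℝ) + 1) ^ k) (Ioc 0 x) :=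
    fun n => Continuous.integrableOn_Ioc (by fun_prop)
  have hnorm : ∀ n : ℕ, ∫ t in Ioc 0 x, ‖t ^ n / ((n : ℝ) + 1) ^ k‖ =
      x ^ (n + 1) / ((n : ℝ) + 1) ^ (k + 1) := by
    intro n
    rw [← integral_pow_div_pow, intervalIntegral.integral_of_le hx0]
    refine setIntegral_congr_fun measurableSet_Ioc fun t ht => ?_
    exact Real.norm_of_nonneg (by have := ht.1.le; positivity)
  have hsum : Summable fun n : ℕ => ∫ t in Ioc 0 x, ‖t ^ n / ((n : ℝ) + 1) ^ k‖ := by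
    simpa only [hnorm] using summable_pow_div_pow (by omega) hx0 hx1
  rw [intervalIntegral.integral_of_le hx0, setIntegral_congr_fun measurableSet_Ioc hterm,
    ← integral_tsum_of_summable_integral_norm hint hsum, polylogSeries]
  refine tsum_congr fun n => ?_
  rw [← intervalIntegral.integral_of_le hx0, integral_pow_div_pow]

lemma integral_one_div_mul_eq_neg_polylogSeries_succ {k : ℕ} (hk : 1 ≤ k) {x : ℝ}
    (hx0 : 0 ≤ x) (hx1 : x ≤ 1) {f : ℝ → ℝ} (hf : ∀ t ∈ Ioo 0 x, f t = -polylogSeries k t) :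
    ∫ t in (0 : ℝ)..x, 1 / t * f t = -polylogSeries (k + 1) x := by
  have hf' : ∀ t ∈ Ioo 0 x, 1 / t * f t = -(1 / t * polylogSeries k t) := fun t ht => by
    rw [hf t ht, mul_neg]
  rw [intervalIntegral.integral_of_le hx0, integral_Ioc_eq_integral_Ioo,
    setIntegral_congr_fun measurableSet_Ioo hf', integral_neg, ← integral_Ioc_eq_integral_Ioo,
    ← intervalIntegral.integral_of_le hx0, integral_one_div_mul_polylogSeries hk hx0 hx1]

theorem stmt_10 :
    (↑(∫ t₁ in (0:ℝ)..1, (1/t₁) *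
        ∫ t₂ in (0:ℝ)..t₁, (1/t₂) *
          ∫ t₃ in (0:ℝ)..t₂, 1/(t₃ - 1)) : ℂ)
      = -riemannZeta 3 := by
  have hH1 : ∀ t ∈ Ioo (0 : ℝ) 1, ∫ s in (0 : ℝ)..t, 1 / (s - 1) = -polylogSeries 1 t :=
    fun t ht => by
      rw [integral_one_div_sub_one ht.2, polylogSeries_one (abs_lt.mpr ⟨by linarith [ht.1], ht.2⟩),
        neg_neg]
  have hH01 : ∀ t₁ ∈ Ioo (0 : ℝ) 1,
      (∫ t₂ in (0 : ℝ)..t₁, 1 / t₂ * ∫ t₃ in (0 : ℝ)..t₂, 1 / (t₃ - 1)) = -polylogSeries 2 t₁ :=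
    fun t₁ ht₁ => integral_one_div_mul_eq_neg_polylogSeries_succ le_rfl ht₁.1.le ht₁.2.le
      fun t₂ ht₂ => hH1 t₂ ⟨ht₂.1, ht₂.2.trans ht₁.2⟩
  rw [integral_one_div_mul_eq_neg_polylogSeries_succ one_le_two zero_le_one le_rfl hH01,
    Complex.ofReal_neg, ofReal_polylogSeries_one (by norm_num : 1 < 2 + 1)]
  norm_num
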